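/- arXiv:1904.01473 — 2 statements merged into one kernel-verified Lean document; each statement's English description precedes it below -/
import Mathlib

section
/- The supremum of the mutual information I(Q;W) over all probability distributions Q on X is equal to C* = log s − H(W(1,·)), i.e., the capacity of the channel W equals log s minus the entropy of the row of input 1, and this supremum is attained. -/
/-!
Since `log (W/QW) = log W - log QW` wherever `Q x W x y ≠ 0`, the mutual information splits as
`I(Q;W) = H(QW) - ∑ₓ Q(x) H(W(x,·))`. The output entropy is at most `log s` (Jensen for the
concave `-t log t`), and every row entropy is at least `H(W(1,·))`: the nonzero rows are
permutations of row 1 and row 0 is uniform, with entropy `log s`. Hence `I(Q;W) ≤ C*`. The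
uniform distribution on the nonzero inputs attains `C*`: by the constant column sums its output
is uniform, and it gives no weight to the uniform row.
-/

open Real BigOperators Finset

/-- Entropy of a finite probability vector, with the convention `0 * log 0 = 0`
(automatic since `Real.log 0 = 0`). -/
noncomputable def ent {n : ℕ} (p : Fin n → ℝ) : ℝ := -∑ y, p y * Real.log (p y)

/-- `Q` is a probability distribution on `Fin n`. -/
def IsProbDist {n : ℕ} (Q : Fin n → ℝ) : Prop := (∀ x, 0 ≤ Q x) ∧ ∑ x, Q x = 1

/-- Output distribution `(QW)(y) = ∑ x, Q x * W x y`. -/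
noncomputable def outDist {r s : ℕ} (Q : Fin r → ℝ) (W : Fin r → Fin s → ℝ) (y : Fin s) : ℝ :=
  ∑ x, Q x * W x y

/-- Mutual information `I(Q;W)`; terms with `Q x * W x y = 0` vanish automatically. -/
noncomputable def mutInfo {r s : ℕ} (Q : Fin r → ℝ) (W : Fin r → Fin s → ℝ) : ℝ :=
  ∑ x, ∑ y, Q x * W x y * Real.log (W x y / outDist Q W y)

/-- Per-input information `I(x;Q,W)`. -/
noncomputable def perInput {r s : ℕ} (x : Fin r) (Q : Fin r → ℝ) (W : Fin r → Fin s → ℝ) : ℝ :=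
  ∑ y, W x y * Real.log (W x y / outDist Q W y)

/-- Channel assumptions: `W` is a transition matrix on inputs `Fin (r+3)` (so `r ≥ 3`)
and outputs `Fin (s+2)` (so `s ≥ 2`), with (i) uniform row at input `0`, (ii) the rows of
nonzero inputs are permutations of the row of input `1`, and (iii) the column sums over
nonzero inputs are constant (weak symmetry of the nonzero-input sub-channel). -/
def PTTOneWay {r s : ℕ} (W : Fin (r + 3) → Fin (s + 2) → ℝ) : Prop :=
  (∀ x y, 0 ≤ W x y) ∧
  (∀ x, ∑ y, W x y = 1) ∧
  (∀ y, W 0 y = 1 / ((s : ℝ) + 2)) ∧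
  (∀ x : Fin (r + 3), x ≠ 0 → ∃ σ : Equiv.Perm (Fin (s + 2)), ∀ y, W x y = W 1 (σ y)) ∧
  (∀ y y' : Fin (s + 2),
    ∑ x ∈ Finset.univ.filter (fun x => x ≠ (0 : Fin (r + 3))), W x y =
    ∑ x ∈ Finset.univ.filter (fun x => x ≠ (0 : Fin (r + 3))), W x y')


lemma ent_eq_sum_negMulLog {n : ℕ} (p : Fin n → ℝ) : ent p = ∑ y, negMulLog (p y) := by
  simp only [ent, negMulLog, neg_mul, sum_neg_distrib]

lemma ent_comp_equiv {n : ℕ} (p : Fin n → ℝ) (σ : Equiv.Perm (Fin n)) : ent (p ∘ σ) = ent p := by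
  simp only [ent_eq_sum_negMulLog]
  exact Equiv.sum_comp σ (fun y => negMulLog (p y))

lemma ent_const_inv_card (n : ℕ) : ent (fun _ : Fin n => 1 / (n : ℝ)) = Real.log n := by
  rcases n.eq_zero_or_pos with rfl | hn
  · simp [ent]
  · simp only [ent, sum_const, card_univ, Fintype.card_fin, nsmul_eq_mul, one_div, Real.log_inv]
    field_simp

theorem IsProbDist.ent_le_log_card {n : ℕ} {p : Fin n → ℝ} (hp : IsProbDist p) :
    ent p ≤ Real.log n := by
  rcases n.eq_zero_or_pos with rfl | hn
  · simp [ent]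
  have hn' : (0 : ℝ) < n := by exact_mod_cast hn
  have jensen := concaveOn_negMulLog.le_map_sum (t := univ) (w := fun _ => 1 / (n : ℝ)) (p := p)
    (fun _ _ => by positivity) (by simp [hn'.ne']) (fun i _ => Set.mem_Ici.mpr (hp.1 i))
  have uniform : negMulLog (1 / (n : ℝ)) = 1 / n * Real.log n := by simp [negMulLog]
  simp only [smul_eq_mul, ← mul_sum, hp.2, mul_one, uniform] at jensen
  rw [ent_eq_sum_negMulLog]
  exact le_of_mul_le_mul_left jensen (by positivity)

section Channel

variable {r s : ℕ} {Q : Fin r → ℝ} {W : Fin r → Fin s → ℝ}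

theorem IsProbDist.outDist (hQ : IsProbDist Q) (hW₀ : ∀ x y, 0 ≤ W x y)
    (hW₁ : ∀ x, ∑ y, W x y = 1) : IsProbDist (outDist Q W) := by
  refine ⟨fun y => sum_nonneg fun x _ => mul_nonneg (hQ.1 x) (hW₀ x y), ?_⟩
  simp only [_root_.outDist, sum_comm (γ := Fin s), ← mul_sum, hW₁, mul_one, hQ.2]

lemma mul_le_outDist (hQ : ∀ x, 0 ≤ Q x) (hW : ∀ x y, 0 ≤ W x y) (x : Fin r) (y : Fin s) :
    Q x * W x y ≤ outDist Q W y :=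
  single_le_sum (f := fun x => Q x * W x y) (fun x _ => mul_nonneg (hQ x) (hW x y)) (mem_univ x)

theorem mutInfo_eq_ent_outDist_sub (hQ : ∀ x, 0 ≤ Q x) (hW : ∀ x y, 0 ≤ W x y) :
    mutInfo Q W = ent (outDist Q W) - ∑ x, Q x * ent (W x) := by
  have term : ∀ x y, Q x * W x y * Real.log (W x y / outDist Q W y) =
      Q x * (W x y * Real.log (W x y)) - Q x * W x y * Real.log (outDist Q W y) := by
    intro x y
    rcases eq_or_lt_of_le (mul_nonneg (hQ x) (hW x y)) with h | h
    · rcases mul_eq_zero.mp h.symm with h' | h' <;> simp [h']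
    · have hW' : W x y ≠ 0 := right_ne_zero_of_mul h.ne'
      rw [Real.log_div hW' (h.trans_le (mul_le_outDist hQ hW x y)).ne']
      ring
  have output_ent : ∑ x, ∑ y, Q x * W x y * Real.log (outDist Q W y) = -ent (outDist Q W) := by
    rw [sum_comm, ent, neg_neg]
    simp only [← sum_mul, _root_.outDist]
  simp only [mutInfo, term, sum_sub_distrib, ← mul_sum, output_ent, ent, mul_neg, sum_neg_distrib]
  ring

end Channel

noncomputable def uniformOnNonzero (r : ℕ) (x : Fin (r + 3)) : ℝ :=
  if x = 0 then 0 else 1 / ((r : ℝ) + 2)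

lemma card_univ_erase_zero (r : ℕ) : #(univ.erase (0 : Fin (r + 3))) = r + 2 := by
  simp [card_erase_of_mem]

theorem isProbDist_uniformOnNonzero (r : ℕ) : IsProbDist (uniformOnNonzero r) := by
  refine ⟨fun x => by unfold uniformOnNonzero; split_ifs <;> positivity, ?_⟩
  rw [← sum_erase univ (a := 0) (by simp [uniformOnNonzero]),
    sum_congr rfl fun x hx => by rw [uniformOnNonzero, if_neg (ne_of_mem_erase hx)],
    sum_const, card_univ_erase_zero, nsmul_eq_mul]
  push_cast
  field_simp

namespace PTTOneWay

variable {r s : ℕ} {W : Fin (r + 3) → Fin (s + 2) → ℝ}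

lemma ent_row_zero (hW : PTTOneWay W) : ent (W 0) = Real.log ((s : ℝ) + 2) := by
  rw [show W 0 = fun _ => 1 / ((s : ℝ) + 2) from funext hW.2.2.1]
  exact_mod_cast ent_const_inv_card (s + 2)

lemma ent_row_of_ne_zero (hW : PTTOneWay W) {x : Fin (r + 3)} (hx : x ≠ 0) :
    ent (W x) = ent (W 1) := by
  obtain ⟨σ, hσ⟩ := hW.2.2.2.1 x hx
  rw [show W x = W 1 ∘ σ from funext hσ, ent_comp_equiv]

lemma ent_row_one_le (hW : PTTOneWay W) (x : Fin (r + 3)) : ent (W 1) ≤ ent (W x) := by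
  rcases eq_or_ne x 0 with rfl | hx
  · rw [hW.ent_row_zero]
    exact_mod_cast IsProbDist.ent_le_log_card (p := W 1) ⟨hW.1 1, hW.2.1 1⟩
  · rw [hW.ent_row_of_ne_zero hx]

lemma sum_nonzero_col (hW : PTTOneWay W) (y : Fin (s + 2)) :
    ∑ x ∈ univ.erase 0, W x y = ((r : ℝ) + 2) / ((s : ℝ) + 2) := by
  have hcol : ∀ y', ∑ x ∈ univ.erase 0, W x y' = ∑ x ∈ univ.erase 0, W x y := by
    simpa only [filter_ne'] using fun y' => hW.2.2.2.2 y' y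
  have total : ∑ y', ∑ x ∈ univ.erase 0, W x y' = (r : ℝ) + 2 := by
    rw [sum_comm, sum_congr rfl fun x _ => hW.2.1 x, sum_const, card_univ_erase_zero]
    ring
  rw [sum_congr rfl fun y' _ => hcol y', sum_const, card_univ, Fintype.card_fin,
    nsmul_eq_mul] at total
  push_cast at total
  rw [eq_div_iff (by positivity)]
  linarith

lemma outDist_uniformOnNonzero (hW : PTTOneWay W) :
    outDist (uniformOnNonzero r) W = fun _ => 1 / ((s : ℝ) + 2) := by
  funext y
  rw [outDist, ← sum_erase univ (a := 0) (by simp [uniformOnNonzero]),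
    sum_congr rfl fun x hx => by rw [uniformOnNonzero, if_neg (ne_of_mem_erase hx)],
    ← mul_sum, hW.sum_nonzero_col]
  field_simp

theorem mutInfo_le (hW : PTTOneWay W) {Q : Fin (r + 3) → ℝ} (hQ : IsProbDist Q) :
    mutInfo Q W ≤ Real.log ((s : ℝ) + 2) - ent (W 1) := by
  have output_le : ent (outDist Q W) ≤ Real.log ((s : ℝ) + 2) := by
    exact_mod_cast (hQ.outDist hW.1 hW.2.1).ent_le_log_card
  have rows_ge : ent (W 1) ≤ ∑ x, Q x * ent (W x) :=
    calc ent (W 1) = ∑ x, Q x * ent (W 1) := by rw [← sum_mul, hQ.2, one_mul]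
      _ ≤ ∑ x, Q x * ent (W x) :=
        sum_le_sum fun x _ => mul_le_mul_of_nonneg_left (hW.ent_row_one_le x) (hQ.1 x)
  rw [mutInfo_eq_ent_outDist_sub hQ.1 hW.1]
  linarith

theorem mutInfo_uniformOnNonzero (hW : PTTOneWay W) :
    mutInfo (uniformOnNonzero r) W = Real.log ((s : ℝ) + 2) - ent (W 1) := by
  have rows : ∑ x, uniformOnNonzero r x * ent (W x) = ent (W 1) := by
    calc ∑ x, uniformOnNonzero r x * ent (W x) = ∑ x, uniformOnNonzero r x * ent (W 1) := by
          refine sum_congr rfl fun x _ => ?_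
          rcases eq_or_ne x 0 with rfl | hx
          · simp [uniformOnNonzero]
          · rw [hW.ent_row_of_ne_zero hx]
      _ = ent (W 1) := by rw [← sum_mul, (isProbDist_uniformOnNonzero r).2, one_mul]
  have output : ent (outDist (uniformOnNonzero r) W) = Real.log ((s : ℝ) + 2) := by
    rw [hW.outDist_uniformOnNonzero, ← funext hW.2.2.1, hW.ent_row_zero]
  rw [mutInfo_eq_ent_outDist_sub (isProbDist_uniformOnNonzero r).1 hW.1, rows, output]

end PTTOneWay

/-- The supremum of the mutual information over all input distributions equals
`C* = log s − H(W(1,·))`, and it is attained. -/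
theorem stmt0 (r s : ℕ) (W : Fin (r + 3) → Fin (s + 2) → ℝ) (hW : PTTOneWay W) :
    IsGreatest {I : ℝ | ∃ Q : Fin (r + 3) → ℝ, IsProbDist Q ∧ I = mutInfo Q W}
      (Real.log ((s : ℝ) + 2) - ent (fun y => W 1 y)) :=
  ⟨⟨uniformOnNonzero r, isProbDist_uniformOnNonzero r, hW.mutInfo_uniformOnNonzero.symm⟩,
    fun _ ⟨_, hQ, hI⟩ => hI ▸ hW.mutInfo_le hQ⟩
end

section
/- For the input distribution P* defined by P*(0) = 0 and P*(x) = 1/(r−1) for every x ≠ 0, the mutual information satisfies I(P*;W) = log s − H(W(1,·)); that is, P* achieves the capacity C* of the channel W. -/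
open Real BigOperators Finset

/- The nonzero rows of `W` are stochastic with constant column sums, so `P*` drives the output
to the uniform distribution; then `I(P*;W) = log s - H(W(x,·))` averaged over `x ≠ 0`, and every
such row has the entropy of row `1`. -/

lemma sum_col_eq_card_div_card {ι κ : Type*} [Fintype κ] (S : Finset ι) (W : ι → κ → ℝ)
    (hrow : ∀ x ∈ S, ∑ y, W x y = 1) (hcol : ∀ y y', ∑ x ∈ S, W x y = ∑ x ∈ S, W x y')
    (y : κ) : ∑ x ∈ S, W x y = #S / Fintype.card κ := by
  have hcard : (Fintype.card κ : ℝ) ≠ 0 := by exact_mod_cast (Fintype.card_pos_iff.2 ⟨y⟩).ne'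
  rw [eq_div_iff hcard]
  calc (∑ x ∈ S, W x y) * Fintype.card κ = ∑ y' : κ, ∑ x ∈ S, W x y' := by
        simp [hcol _ y, mul_comm]
    _ = ∑ x ∈ S, ∑ y', W x y' := Finset.sum_comm
    _ = #S := by simp [Finset.sum_congr rfl hrow]

lemma ent_comp_perm {n : ℕ} (p : Fin n → ℝ) (σ : Equiv.Perm (Fin n)) :
    ent (fun y => p (σ y)) = ent p := by
  unfold ent
  rw [Equiv.sum_comp σ (fun y => p y * Real.log (p y))]

lemma outDist_ite_zero {r s : ℕ} (c : ℝ) (W : Fin (r + 1) → Fin s → ℝ) (y : Fin s) :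
    outDist (fun x => if x = 0 then 0 else c) W y = c * ∑ x ∈ univ.filter (· ≠ 0), W x y := by
  simp [outDist, Finset.sum_filter, Finset.mul_sum, ite_mul]

lemma mutInfo_eq_of_outDist_eq_const {r s : ℕ} (Q : Fin r → ℝ) (W : Fin r → Fin s → ℝ)
    (hrow : ∀ x, ∑ y, W x y = 1) {c : ℝ} (hc : c ≠ 0) (hout : ∀ y, outDist Q W y = c) :
    mutInfo Q W = ∑ x, Q x * (-Real.log c - ent (W x)) := by
  have hterm : ∀ x y,
      W x y * Real.log (W x y / c) = W x y * Real.log (W x y) - W x y * Real.log c := by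
    intro x y
    rcases eq_or_ne (W x y) 0 with h | h
    · simp [h]
    · rw [Real.log_div h hc]; ring
  refine Finset.sum_congr rfl fun x _ => ?_
  simp only [hout, mul_assoc, ← Finset.mul_sum, hterm, Finset.sum_sub_distrib, ← Finset.sum_mul,
    hrow, ent]
  ring

/-- The input distribution `P*` uniform on nonzero inputs achieves `C* = log s − H(W(1,·))`. -/
theorem stmt1 (r s : ℕ) (W : Fin (r + 3) → Fin (s + 2) → ℝ) (hW : PTTOneWay W) :
    mutInfo (fun x : Fin (r + 3) => if x = 0 then (0 : ℝ) else ((r : ℝ) + 2)⁻¹) W =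
      Real.log ((s : ℝ) + 2) - ent (fun y => W 1 y) := by
  obtain ⟨-, hrow, -, hperm, hcol⟩ := hW
  have hcard : #(univ.filter (· ≠ (0 : Fin (r + 3)))) = r + 2 := by
    simp [Finset.filter_ne']
  have hout : ∀ y, outDist (fun x : Fin (r + 3) => if x = 0 then (0 : ℝ) else ((r : ℝ) + 2)⁻¹) W y
      = ((s : ℝ) + 2)⁻¹ := by
    intro y
    rw [outDist_ite_zero, sum_col_eq_card_div_card _ W (fun x _ => hrow x) hcol, hcard,
      Fintype.card_fin]
    field_simp
    push_cast
    ring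
  have hent : ∀ x : Fin (r + 3), x ≠ 0 → ent (W x) = ent (fun y => W 1 y) := by
    intro x hx
    obtain ⟨σ, hσ⟩ := hperm x hx
    exact (congrArg ent (funext hσ)).trans (ent_comp_perm _ σ)
  rw [mutInfo_eq_of_outDist_eq_const _ W hrow (by positivity) hout, Fin.sum_univ_succ]
  simp only [if_pos, Fin.succ_ne_zero, if_false, hent _ (Fin.succ_ne_zero _), zero_mul, zero_add,
    Finset.sum_const, Finset.card_univ, Fintype.card_fin, nsmul_eq_mul, Real.log_inv, neg_neg]
  push_cast
  field_simp
end
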